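/- Fix α > 0 and a compact set K ⊂ (-2,2). There exists C > 0 such that for every integer N ≥ 1 and every x ∈ K, |∫₀ˣ (e^{α²u²/4}/√(4-u²)) sin( ((N+α²)/2)·u√(4-u²) - 2N·arccos(u/2) - 2·arcsin(u/2) ) du| ≤ C/N. -/

import Mathlib

open Real MeasureTheory


lemma sqrt_half (u : ℝ) (h4 : 0 ≤ 4 - u^2) :
    Real.sqrt (1 - (u/2)^2) = Real.sqrt (4 - u^2) / 2 := by
  have h : (1 : ℝ) - (u/2)^2 = (4 - u^2)/4 := by ring
  rw [h, Real.sqrt_div h4]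
  rw [show (4:ℝ) = 2^2 by norm_num, Real.sqrt_sq (by norm_num : (0:ℝ) ≤ 2)]

lemma hasDerivAt_sqrt4 (u : ℝ) (h4 : 0 < 4 - u^2) :
    HasDerivAt (fun t : ℝ => Real.sqrt (4 - t^2)) (-u / Real.sqrt (4 - u^2)) u := by
  have h1 : HasDerivAt (fun t : ℝ => 4 - t^2) (-(2*u)) u := by
    simpa using ((hasDerivAt_pow 2 u).const_sub 4)
  have := (Real.hasDerivAt_sqrt (ne_of_gt h4)).comp u h1
  refine this.congr_deriv ?_
  field_simp

lemma hasDerivAt_phi (c : ℝ) (N : ℕ) (u : ℝ) (h4 : 0 < 4 - u^2) :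
    HasDerivAt (fun t : ℝ => ((N:ℝ) + c)/2 * (t * Real.sqrt (4 - t^2))
        - 2*N * Real.arccos (t/2) - 2 * Real.arcsin (t/2))
      (((N:ℝ)*(4 - u^2) + c*(2 - u^2) - 2) / Real.sqrt (4 - u^2)) u := by
  have hne1 : u/2 ≠ -1 := by intro h; nlinarith [h]
  have hne2 : u/2 ≠ 1 := by intro h; nlinarith [h]
  have hs : Real.sqrt (4 - u^2) ^ 2 = 4 - u^2 := Real.sq_sqrt h4.le
  have hspos : 0 < Real.sqrt (4 - u^2) := Real.sqrt_pos.2 h4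
  have hhalf : HasDerivAt (fun t : ℝ => t/2) (1/2) u := (hasDerivAt_id u).div_const 2
  have hAC : HasDerivAt (fun t : ℝ => Real.arccos (t/2))
      (-(1 / Real.sqrt (1 - (u/2)^2)) * (1/2)) u :=
    by have := (Real.hasDerivAt_arccos hne1 hne2).comp u hhalf; exact this
  have hAS : HasDerivAt (fun t : ℝ => Real.arcsin (t/2))
      ((1 / Real.sqrt (1 - (u/2)^2)) * (1/2)) u :=
    by have := (Real.hasDerivAt_arcsin hne1 hne2).comp u hhalf; exact this
  have hP : HasDerivAt (fun t : ℝ => t * Real.sqrt (4 - t^2))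
      (1 * Real.sqrt (4 - u^2) + u * (-u / Real.sqrt (4 - u^2))) u :=
    (hasDerivAt_id u).mul (hasDerivAt_sqrt4 u h4)
  have := (((hP.const_mul (((N:ℝ) + c)/2)).sub (hAC.const_mul (2*(N:ℝ)))).sub (hAS.const_mul 2))
  refine this.congr_deriv ?_
  rw [sqrt_half u h4.le]
  field_simp
  rw [hs]; ring

lemma hasDerivAt_g (c : ℝ) (N : ℕ) (u : ℝ)
    (hD : (N:ℝ)*(4 - u^2) + c*(2 - u^2) - 2 ≠ 0) :
    HasDerivAt (fun t : ℝ => Real.exp (c*t^2/4) / ((N:ℝ)*(4 - t^2) + c*(2 - t^2) - 2))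
      (Real.exp (c*u^2/4) * ((c*u/2)*((N:ℝ)*(4 - u^2) + c*(2 - u^2) - 2) + 2*u*((N:ℝ)+c))
        / ((N:ℝ)*(4 - u^2) + c*(2 - u^2) - 2)^2) u := by
  have hq : HasDerivAt (fun t : ℝ => c*t^2/4) (c*u/2) u := by
    have := ((hasDerivAt_pow 2 u).const_mul c).div_const 4
    refine this.congr_deriv ?_; push_cast; ring
  have hE : HasDerivAt (fun t : ℝ => Real.exp (c*t^2/4)) (Real.exp (c*u^2/4) * (c*u/2)) u :=
    (Real.hasDerivAt_exp _).comp u hq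
  have hD' : HasDerivAt (fun t : ℝ => (N:ℝ)*(4 - t^2) + c*(2 - t^2) - 2)
      (-2*u*((N:ℝ)+c)) u := by
    have := ((((hasDerivAt_pow 2 u).const_sub 4).const_mul (N:ℝ)).add
      (((hasDerivAt_pow 2 u).const_sub 2).const_mul c)).sub_const 2
    refine this.congr_deriv ?_; push_cast; ring
  have := hE.div hD' hD
  refine this.congr_deriv ?_
  field_simp
  ring

set_option maxHeartbeats 2000000 in
lemma ibp_bound (c : ℝ) (hc : 0 < c) (b : ℝ) (hb0 : 0 ≤ b) (hb2 : b < 2)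
    (N : ℕ) (hN1 : 1 ≤ N)
    (hD : ∀ u ∈ Set.Icc (-b) b,
      (N:ℝ)*(4-b^2)/2 ≤ (N:ℝ)*(4 - u^2) + c*(2 - u^2) - 2)
    (x : ℝ) (hx : x ∈ Set.Icc (-b) b) :
    |∫ u in (0:ℝ)..x, Real.exp (c*u^2/4) / Real.sqrt (4 - u^2) *
        Real.sin (((N:ℝ) + c)/2 * (u * Real.sqrt (4 - u^2))
          - 2*N * Real.arccos (u/2) - 2 * Real.arcsin (u/2))|
      ≤ (4*Real.exp c/(4-b^2) + 8*Real.exp c*(2*c^2+10*c+4)/(4-b^2)^2) / N := by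
  have hδ : 0 < 4 - b^2 := by nlinarith
  have hNpos : (0:ℝ) < N := by exact_mod_cast hN1
  have hN1R : (1:ℝ) ≤ N := by exact_mod_cast hN1
  set D : ℝ → ℝ := fun t => (N:ℝ)*(4 - t^2) + c*(2 - t^2) - 2 with hDdef
  set g : ℝ → ℝ := fun t => Real.exp (c*t^2/4) / D t with hgdef
  set g' : ℝ → ℝ := fun t => Real.exp (c*t^2/4) * ((c*t/2)*D t + 2*t*((N:ℝ)+c)) / (D t)^2
    with hg'def
  set φ : ℝ → ℝ := fun t => ((N:ℝ) + c)/2 * (t * Real.sqrt (4 - t^2))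
      - 2*N * Real.arccos (t/2) - 2 * Real.arcsin (t/2) with hφdef
  have h0mem : (0:ℝ) ∈ Set.Icc (-b) b := by constructor <;> linarith
  have hsub : Set.uIcc (0:ℝ) x ⊆ Set.Icc (-b) b := Set.uIcc_subset_Icc h0mem hx
  have key : ∀ u ∈ Set.Icc (-b) b, 0 < 4 - u^2 ∧ (N:ℝ)*(4-b^2)/2 ≤ D u := by
    intro u hu
    have h1 : u^2 ≤ b^2 := sq_le_sq' hu.1 hu.2
    exact ⟨by nlinarith, hD u hu⟩
  have hDpos : ∀ u ∈ Set.Icc (-b) b, 0 < D u := fun u hu =>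
    lt_of_lt_of_le (by positivity) (key u hu).2
  -- rewrite the integrand
  have hcongr : (∫ u in (0:ℝ)..x, Real.exp (c*u^2/4) / Real.sqrt (4 - u^2) *
        Real.sin (φ u)) = ∫ u in (0:ℝ)..x, g u * ((D u / Real.sqrt (4 - u^2)) * Real.sin (φ u)) := by
    apply intervalIntegral.integral_congr
    intro u hu
    have hu' := hsub hu
    have h4 := (key u hu').1
    have hs : Real.sqrt (4 - u^2) ≠ 0 := (Real.sqrt_pos.2 h4).ne'
    have hDne : D u ≠ 0 := (hDpos u hu').ne'
    simp only [hgdef]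
    field_simp
  -- integration by parts
  have hderivg : ∀ u ∈ Set.uIcc (0:ℝ) x, HasDerivAt g (g' u) u := fun u hu =>
    hasDerivAt_g c N u (hDpos u (hsub hu)).ne'
  have hderivv : ∀ u ∈ Set.uIcc (0:ℝ) x,
      HasDerivAt (fun t => -Real.cos (φ t)) ((D u / Real.sqrt (4 - u^2)) * Real.sin (φ u)) u := by
    intro u hu
    have h4 := (key u (hsub hu)).1
    have hφd := hasDerivAt_phi c N u h4
    have := ((Real.hasDerivAt_cos (φ u)).comp u hφd).neg
    refine this.congr_deriv ?_
    simp only [hφdef, hDdef]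
    ring
  have hDcont : Continuous D := by fun_prop
  have hφcont : Continuous φ := by
    refine (Continuous.sub (Continuous.sub ?_ ?_) ?_)
    · exact continuous_const.mul (continuous_id.mul (Real.continuous_sqrt.comp (by fun_prop)))
    · exact continuous_const.mul (Real.continuous_arccos.comp (by fun_prop))
    · exact continuous_const.mul (Real.continuous_arcsin.comp (by fun_prop))
  have hg'cont : ContinuousOn g' (Set.uIcc (0:ℝ) x) := by
    apply ContinuousOn.div
    · fun_prop
    · fun_prop
    · exact fun u hu => pow_ne_zero 2 (hDpos u (hsub hu)).ne'
  have hvcont : ContinuousOn (fun u => (D u / Real.sqrt (4 - u^2)) * Real.sin (φ u))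
      (Set.uIcc (0:ℝ) x) := by
    apply ContinuousOn.mul
    · apply ContinuousOn.div
      · fun_prop
      · fun_prop
      · exact fun u hu => (Real.sqrt_pos.2 (key u (hsub hu)).1).ne'
    · exact (Real.continuous_sin.comp hφcont).continuousOn
  have hibp := intervalIntegral.integral_mul_deriv_eq_deriv_mul hderivg hderivv
    hg'cont.intervalIntegrable hvcont.intervalIntegrable
  rw [hcongr, hibp]
  -- bounds
  have hEb : ∀ u ∈ Set.Icc (-b) b, Real.exp (c*u^2/4) ≤ Real.exp c := by
    intro u hu
    have h1 : u^2 ≤ b^2 := sq_le_sq' hu.1 hu.2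
    exact Real.exp_le_exp.2 (by nlinarith)
  have hgb : ∀ u ∈ Set.Icc (-b) b, |g u| ≤ 2*Real.exp c/((N:ℝ)*(4-b^2)) := by
    intro u hu
    have hDl := (key u hu).2
    have hDp := hDpos u hu
    have hE := hEb u hu
    have hEpos : 0 < Real.exp (c*u^2/4) := Real.exp_pos _
    have hDu : D u = (N:ℝ)*(4 - u^2) + c*(2 - u^2) - 2 := rfl
    rw [hgdef]
    simp only
    rw [abs_div, abs_of_pos hEpos, abs_of_pos hDp, div_le_div_iff₀ hDp (by positivity)]
    nlinarith [Real.exp_pos c,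
      mul_le_mul_of_nonneg_right hE (by positivity : (0:ℝ) ≤ (N:ℝ)*(4-b^2)),
      mul_le_mul_of_nonneg_left hDl (Real.exp_pos c).le]
  have hg'b : ∀ u ∈ Set.Icc (-b) b,
      |g' u| ≤ 4*Real.exp c*(2*c^2+10*c+4)/((N:ℝ)*(4-b^2)^2) := by
    intro u hu
    have hDl := (key u hu).2
    have hDp := hDpos u hu
    have hE := hEb u hu
    have hEpos : 0 < Real.exp (c*u^2/4) := Real.exp_pos _
    have hu2 : u^2 ≤ 4 := by nlinarith [sq_le_sq' hu.1 hu.2]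
    have hub : |u| ≤ 2 := by
      rw [abs_le]; constructor <;> nlinarith [sq_nonneg (u+2), sq_nonneg (u-2)]
    have hDu : D u = (N:ℝ)*(4 - u^2) + c*(2 - u^2) - 2 := rfl
    have hDub : |D u| ≤ (N:ℝ)*(6+2*c) := by
      rw [abs_le, hDu]
      rw [hDu] at hDp
      constructor
      · have : (0:ℝ) ≤ (N:ℝ)*(6+2*c) := by positivity
        linarith
      · nlinarith [sq_nonneg u]
    have hnum : |(c*u/2)*D u + 2*u*((N:ℝ)+c)| ≤ (N:ℝ)*(2*c^2+10*c+4) := by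
      have h1 : |(c*u/2)*D u| ≤ c*((N:ℝ)*(6+2*c)) := by
        rw [abs_mul]
        have hcu : |c*u/2| ≤ c := by
          rw [abs_div, abs_mul, abs_of_pos hc]
          simp only [abs_two]
          nlinarith
        nlinarith [abs_nonneg (D u), abs_nonneg (c*u/2)]
      have h2 : |2*u*((N:ℝ)+c)| ≤ 4*((N:ℝ)+c) := by
        rw [abs_mul, abs_mul, abs_two, abs_of_pos (by positivity : (0:ℝ) < (N:ℝ)+c)]
        nlinarith
      calc |(c*u/2)*D u + 2*u*((N:ℝ)+c)| ≤ |(c*u/2)*D u| + |2*u*((N:ℝ)+c)| := abs_add_le _ _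
        _ ≤ c*((N:ℝ)*(6+2*c)) + 4*((N:ℝ)+c) := by linarith
        _ ≤ (N:ℝ)*(2*c^2+10*c+4) := by nlinarith
    have hD2 : ((N:ℝ)*(4-b^2)/2)^2 ≤ (D u)^2 := by
      apply pow_le_pow_left₀ (by positivity) hDl
    rw [hg'def]
    simp only
    rw [abs_div, abs_mul, abs_of_pos hEpos, abs_of_pos (pow_pos hDp 2)]
    calc Real.exp (c*u^2/4) * |(c*u/2)*D u + 2*u*((N:ℝ)+c)| / (D u)^2
        ≤ Real.exp c * ((N:ℝ)*(2*c^2+10*c+4)) / (((N:ℝ)*(4-b^2)/2)^2) := by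
          gcongr
      _ = 4*Real.exp c*(2*c^2+10*c+4)/((N:ℝ)*(4-b^2)^2) := by
          field_simp
          ring
  -- final assembly
  have hxb : |x| ≤ 2 := by
    rw [abs_le]; constructor <;> [linarith [hx.1]; linarith [hx.2]]
  have hb1 : |g x * -Real.cos (φ x)| ≤ 2*Real.exp c/((N:ℝ)*(4-b^2)) := by
    rw [abs_mul, abs_neg]
    calc |g x| * |Real.cos (φ x)| ≤ |g x| * 1 :=
          mul_le_mul_of_nonneg_left (Real.abs_cos_le_one _) (abs_nonneg _)
      _ ≤ 2*Real.exp c/((N:ℝ)*(4-b^2)) := by rw [mul_one]; exact hgb x hx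
  have hb0' : |g 0 * -Real.cos (φ 0)| ≤ 2*Real.exp c/((N:ℝ)*(4-b^2)) := by
    rw [abs_mul, abs_neg]
    calc |g 0| * |Real.cos (φ 0)| ≤ |g 0| * 1 :=
          mul_le_mul_of_nonneg_left (Real.abs_cos_le_one _) (abs_nonneg _)
      _ ≤ 2*Real.exp c/((N:ℝ)*(4-b^2)) := by rw [mul_one]; exact hgb 0 h0mem
  have hbI : |∫ u in (0:ℝ)..x, g' u * -Real.cos (φ u)|
      ≤ 4*Real.exp c*(2*c^2+10*c+4)/((N:ℝ)*(4-b^2)^2) * 2 := by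
    have h := intervalIntegral.norm_integral_le_of_norm_le_const
      (C := 4*Real.exp c*(2*c^2+10*c+4)/((N:ℝ)*(4-b^2)^2))
      (f := fun u => g' u * -Real.cos (φ u)) (a := (0:ℝ)) (b := x) ?_
    · rw [Real.norm_eq_abs] at h
      calc |∫ u in (0:ℝ)..x, g' u * -Real.cos (φ u)|
          ≤ 4*Real.exp c*(2*c^2+10*c+4)/((N:ℝ)*(4-b^2)^2) * |x - 0| := h
        _ ≤ 4*Real.exp c*(2*c^2+10*c+4)/((N:ℝ)*(4-b^2)^2) * 2 := by
            apply mul_le_mul_of_nonneg_left _ (by positivity)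
            simpa using hxb
    · intro u hu
      have hu' : u ∈ Set.Icc (-b) b := hsub (Set.uIoc_subset_uIcc hu)
      rw [Real.norm_eq_abs, abs_mul, abs_neg]
      calc |g' u| * |Real.cos (φ u)| ≤ |g' u| * 1 :=
            mul_le_mul_of_nonneg_left (Real.abs_cos_le_one _) (abs_nonneg _)
        _ ≤ _ := by rw [mul_one]; exact hg'b u hu'
  calc |g x * -Real.cos (φ x) - g 0 * -Real.cos (φ 0) - ∫ u in (0:ℝ)..x, g' u * -Real.cos (φ u)|
      ≤ |g x * -Real.cos (φ x)| + |g 0 * -Real.cos (φ 0)|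
        + |∫ u in (0:ℝ)..x, g' u * -Real.cos (φ u)| := by
        have tri : ∀ p q : ℝ, |p - q| ≤ |p| + |q| := fun p q => by
          rw [sub_eq_add_neg]
          exact (abs_add_le _ _).trans (by rw [abs_neg])
        calc |g x * -Real.cos (φ x) - g 0 * -Real.cos (φ 0)
              - ∫ u in (0:ℝ)..x, g' u * -Real.cos (φ u)|
            ≤ |g x * -Real.cos (φ x) - g 0 * -Real.cos (φ 0)|
              + |∫ u in (0:ℝ)..x, g' u * -Real.cos (φ u)| := tri _ _
          _ ≤ _ := by
              linarith [tri (g x * -Real.cos (φ x)) (g 0 * -Real.cos (φ 0))]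
    _ ≤ 2*Real.exp c/((N:ℝ)*(4-b^2)) + 2*Real.exp c/((N:ℝ)*(4-b^2))
        + 4*Real.exp c*(2*c^2+10*c+4)/((N:ℝ)*(4-b^2)^2) * 2 := by linarith
    _ = (4*Real.exp c/(4-b^2) + 8*Real.exp c*(2*c^2+10*c+4)/(4-b^2)^2) / N := by
        field_simp
        ring

set_option maxHeartbeats 2000000 in
/-- Lemma (oscillatory integral bound, sine version): for fixed α > 0 and a compact
K ⊂ (-2,2), the integral ∫₀ˣ (e^{α²u²/4}/√(4-u²))
sin(((N+α²)/2)u√(4-u²) - 2N arccos(u/2) - 2 arcsin(u/2)) du is O(1/N) uniformly on K. -/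
theorem oscillatory_integral_bound_sin (α : ℝ) (hα : 0 < α)
    (K : Set ℝ) (hK : IsCompact K) (hK2 : K ⊆ Set.Ioo (-2) 2) :
    ∃ C > (0:ℝ), ∀ N : ℕ, 1 ≤ N → ∀ x ∈ K,
      |∫ u in (0:ℝ)..x,
          Real.exp (α^2*u^2/4) / Real.sqrt (4 - u^2) *
            Real.sin ((N + α^2)/2 * (u * Real.sqrt (4 - u^2))
              - 2*N * Real.arccos (u/2) - 2 * Real.arcsin (u/2))|
        ≤ C / N := by
  rcases K.eq_empty_or_nonempty with rfl | hne
  · exact ⟨1, one_pos, by simp⟩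
  obtain ⟨z, hzK, hz⟩ := hK.exists_isMaxOn hne continuous_abs.continuousOn
  rw [isMaxOn_iff] at hz
  set c : ℝ := α^2 with hcdef
  have hc : 0 < c := by positivity
  set b : ℝ := |z| with hbdef
  have hb0 : 0 ≤ b := abs_nonneg z
  have hb2 : b < 2 := abs_lt.2 ⟨(hK2 hzK).1, (hK2 hzK).2⟩
  have hKb : K ⊆ Set.Icc (-b) b := fun y hy => abs_le.1 (hz y hy)
  have hδ : 0 < 4 - b^2 := by nlinarith
  set Cb : ℝ := 4*Real.exp c/(4-b^2) + 8*Real.exp c*(2*c^2+10*c+4)/(4-b^2)^2 with hCbdef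
  have hCb : 0 < Cb := by positivity
  set N₀ : ℕ := ⌈(4*c+4)/(4-b^2)⌉₊ + 1 with hN₀def
  set M : ℝ := 2 * (Real.exp c / Real.sqrt (4-b^2)) with hMdef
  have hM : 0 < M := by positivity
  refine ⟨Cb + M * N₀ + 1, by positivity, ?_⟩
  intro N hN1 x hxK
  have hx : x ∈ Set.Icc (-b) b := hKb hxK
  have hNpos : (0:ℝ) < N := by exact_mod_cast hN1
  by_cases hbig : N₀ ≤ N
  · have hNR : (4*c+4)/(4-b^2) ≤ (N:ℝ) := by
      calc (4*c+4)/(4-b^2) ≤ (⌈(4*c+4)/(4-b^2)⌉₊ : ℝ) := Nat.le_ceil _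
        _ ≤ (N:ℝ) := by exact_mod_cast Nat.le_of_succ_le hbig
    have hNd : 4*c+4 ≤ (N:ℝ)*(4-b^2) := by
      rw [div_le_iff₀ hδ] at hNR; linarith
    have hD : ∀ u ∈ Set.Icc (-b) b,
        (N:ℝ)*(4-b^2)/2 ≤ (N:ℝ)*(4 - u^2) + c*(2 - u^2) - 2 := by
      intro u hu
      have hu2 : u^2 ≤ b^2 := sq_le_sq' hu.1 hu.2
      have hu4 : u^2 ≤ 4 := by nlinarith
      nlinarith [hNpos]
    have := ibp_bound c hc b hb0 hb2 N hN1 hD x hx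
    calc _ ≤ Cb / N := this
      _ ≤ (Cb + M * N₀ + 1) / N := by
          gcongr
          nlinarith [hM, (Nat.cast_nonneg N₀ : (0:ℝ) ≤ N₀)]
  · push_neg at hbig
    have hs4 : 0 < Real.sqrt (4-b^2) := Real.sqrt_pos.2 hδ
    have hbound : |∫ u in (0:ℝ)..x,
        Real.exp (c*u^2/4) / Real.sqrt (4 - u^2) *
          Real.sin (((N:ℝ) + c)/2 * (u * Real.sqrt (4 - u^2))
            - 2*N * Real.arccos (u/2) - 2 * Real.arcsin (u/2))| ≤ M := by
      have h0mem : (0:ℝ) ∈ Set.Icc (-b) b := by constructor <;> linarith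
      have hsub : Set.uIcc (0:ℝ) x ⊆ Set.Icc (-b) b := Set.uIcc_subset_Icc h0mem hx
      have h := intervalIntegral.norm_integral_le_of_norm_le_const
        (C := Real.exp c / Real.sqrt (4-b^2))
        (f := fun u => Real.exp (c*u^2/4) / Real.sqrt (4 - u^2) *
          Real.sin (((N:ℝ) + c)/2 * (u * Real.sqrt (4 - u^2))
            - 2*N * Real.arccos (u/2) - 2 * Real.arcsin (u/2))) (a := (0:ℝ)) (b := x) ?_
      · rw [Real.norm_eq_abs] at h
        refine h.trans ?_
        rw [hMdef]
        have hxb : |x - 0| ≤ 2 := by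
          rw [sub_zero, abs_le]; constructor <;> [linarith [hx.1]; linarith [hx.2]]
        calc Real.exp c / Real.sqrt (4-b^2) * |x - 0|
            ≤ Real.exp c / Real.sqrt (4-b^2) * 2 := by gcongr
          _ = 2 * (Real.exp c / Real.sqrt (4-b^2)) := by ring
      · intro u hu
        have hu' : u ∈ Set.Icc (-b) b := hsub (Set.uIoc_subset_uIcc hu)
        have hu2 : u^2 ≤ b^2 := sq_le_sq' hu'.1 hu'.2
        have h4 : 0 < 4 - u^2 := by nlinarith
        have hsl : Real.sqrt (4-b^2) ≤ Real.sqrt (4-u^2) := by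
          apply Real.sqrt_le_sqrt; nlinarith
        have hspos : 0 < Real.sqrt (4-u^2) := Real.sqrt_pos.2 h4
        rw [Real.norm_eq_abs, abs_mul]
        have hE : Real.exp (c*u^2/4) ≤ Real.exp c := Real.exp_le_exp.2 (by nlinarith)
        calc |Real.exp (c*u^2/4) / Real.sqrt (4-u^2)| * |Real.sin _|
            ≤ |Real.exp (c*u^2/4) / Real.sqrt (4-u^2)| * 1 :=
              mul_le_mul_of_nonneg_left (Real.abs_sin_le_one _) (abs_nonneg _)
          _ = Real.exp (c*u^2/4) / Real.sqrt (4-u^2) := by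
              rw [mul_one, abs_div, abs_of_pos (Real.exp_pos _), abs_of_pos hspos]
          _ ≤ Real.exp c / Real.sqrt (4-b^2) := by gcongr
    refine hbound.trans ?_
    rw [le_div_iff₀ hNpos]
    have hNN : (N:ℝ) ≤ (N₀:ℝ) := by exact_mod_cast hbig.le
    nlinarith [hM, hNN]
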